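/- Let ω : ℝ → ℂ be continuously differentiable with compact support, s : ℤ → ℂ have finite support, N > 0, f an integer. Then the function F(t) = ∑_{k ∈ ℤ} ω(k - (t - ⌊t⌋)) · s(⌊t⌋ + k) · e^{-2πi(k - (t - ⌊t⌋))f/N} is differentiable at every real t, including integer values of t. -/

import Mathlib

open Complex Real

/-!
Substituting `j = ⌊t⌋ + k` turns the frame into `∑ⱼ ω(j - t) s(j) e^{-2πi(j - t)f/N}`, in which
`t` no longer enters through `⌊t⌋` or `Int.fract t`. Since `s` has finite support this is a finite
sum of functions that are differentiable in `t` everywhere, integers included.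
-/

theorem finsum_sub_fract_floor_add {M : Type*} [AddCommMonoid M] (G : ℝ → ℤ → M) (t : ℝ) :
    ∑ᶠ k : ℤ, G (k - Int.fract t) (⌊t⌋ + k) = ∑ᶠ j : ℤ, G (j - t) j := by
  rw [← finsum_comp_equiv (Equiv.addLeft ⌊t⌋) (f := fun j : ℤ => G (j - t) j)]
  refine finsum_congr fun k => ?_
  rw [Equiv.coe_addLeft, Int.fract]
  push_cast
  ring_nf

theorem DifferentiableAt.finsum_of_support_subset {ι 𝕜 E F : Type*} [NontriviallyNormedField 𝕜]
    [NormedAddCommGroup E] [NormedSpace 𝕜 E] [NormedAddCommGroup F] [NormedSpace 𝕜 F]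
    {g : ι → E → F} {x : E} {S : Finset ι} (hS : ∀ j ∉ S, g j = 0)
    (hg : ∀ j ∈ S, DifferentiableAt 𝕜 (g j) x) :
    DifferentiableAt 𝕜 (fun u => ∑ᶠ j, g j u) x := by
  have hsum : (fun u => ∑ᶠ j, g j u) = fun u => ∑ j ∈ S, g j u := by
    refine funext fun u => finsum_eq_sum_of_support_subset _ fun j hj => ?_
    by_contra hjS
    exact hj (congrFun (hS j hjS) u)
  rw [hsum]
  exact DifferentiableAt.fun_sum hg

theorem differentiable_window_mul_exp {ω : ℝ → ℂ} (hω : Differentiable ℝ ω) (c : ℂ) (j : ℝ) :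
    Differentiable ℝ fun u : ℝ => ω (j - u) * Complex.exp (c * ((j - u : ℝ) : ℂ)) := by
  fun_prop

theorem stmt_3_general (ω : ℝ → ℂ) (hω1 : ContDiff ℝ 1 ω)
    (s : ℤ → ℂ) (hs : (Function.support s).Finite)
    (N : ℕ) (f : ℤ) (t : ℝ) :
    DifferentiableAt ℝ (fun t : ℝ =>
      ∑ᶠ k : ℤ, ω ((k : ℝ) - Int.fract t) * s (⌊t⌋ + k) *
        Complex.exp (-2 * (Real.pi : ℂ) * Complex.I *
          ((k : ℂ) - (Int.fract t : ℝ)) * (f : ℂ) / (N : ℂ))) t := by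
  set c : ℂ := -2 * (Real.pi : ℂ) * Complex.I * f / N
  have hframe : ∀ u : ℝ, (∑ᶠ k : ℤ, ω ((k : ℝ) - Int.fract u) * s (⌊u⌋ + k) *
      Complex.exp (-2 * (Real.pi : ℂ) * Complex.I *
        ((k : ℂ) - (Int.fract u : ℝ)) * (f : ℂ) / (N : ℂ))) =
      ∑ᶠ j : ℤ, s j * (ω ((j : ℝ) - u) * Complex.exp (c * (((j : ℝ) - u : ℝ) : ℂ))) := by
    intro u
    rw [← finsum_sub_fract_floor_add (fun x j => s j * (ω x * Complex.exp (c * (x : ℂ)))) u]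
    refine finsum_congr fun k => ?_
    simp only [c]
    push_cast
    ring_nf
  simp only [hframe]
  refine DifferentiableAt.finsum_of_support_subset (S := hs.toFinset) (fun j hj => ?_)
    fun j _ => ((differentiable_window_mul_exp (hω1.differentiable one_ne_zero) c j).const_mul
      (s j)).differentiableAt
  ext u
  simp [show s j = 0 by simpa using hj]

/-- Proposition 2: the modified STFT frame is differentiable at
every real frame position `t`, including integers. -/
theorem stmt_3 (ω : ℝ → ℂ) (hω1 : ContDiff ℝ 1 ω) (hωc : HasCompactSupport ω)
    (s : ℤ → ℂ) (hs : (Function.support s).Finite)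
    (N : ℕ) (hN : 0 < N) (f : ℤ) (t : ℝ) :
    DifferentiableAt ℝ (fun t : ℝ =>
      ∑ᶠ k : ℤ, ω ((k : ℝ) - Int.fract t) * s (⌊t⌋ + k) *
        Complex.exp (-2 * (Real.pi : ℂ) * Complex.I *
          ((k : ℂ) - (Int.fract t : ℝ)) * (f : ℂ) / (N : ℂ))) t :=
  stmt_3_general ω hω1 s hs N f t
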